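/- Let G be a finite undirected graph with a Gomory–Hu tree T. For any two vertices u, v, let f* = (s,t) be an edge of minimum capacity α(f*) on the unique u–v path in T. Then the bipartition of vertices given by the two components of T \ f* is a minimum-capacity u–v cut in G, and its capacity equals α(f*). -/

import Mathlib

/-!
Let `S` separate `u` from `v`. The tree path from `u` to `v` leaves `S` along some tree edge `g`,
so the Gomory–Hu property of `g` gives `α g ≤ c(δ S)`, and `α f ≤ α g` by the choice of `f`.
On the other hand the fundamental cut `W` of `f` has capacity `α f`, and it separates `u` from `v`
because the path, having no repeated edges, crosses `W` exactly once (at `f`).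
-/

open Finset

/-- Edges of `E` incident to vertex `v` (the set `δ(v)`). -/
def edgesInc {V : Type*} [Fintype V] [DecidableEq V] (E : Finset (Sym2 V)) (v : V) :
    Finset (Sym2 V) :=
  E.filter (fun e => v ∈ e)

/-- Edges of `E` with exactly one endpoint in `S` (the cut-set `δ(S)`). -/
def edgesCut {V : Type*} [Fintype V] [DecidableEq V] (E : Finset (Sym2 V)) (S : Finset V) :
    Finset (Sym2 V) :=
  E.filter (fun e => ∃ a b : V, e = s(a, b) ∧ a ∈ S ∧ b ∉ S)

/-- Edges of `E` with both endpoints in `S` (the set `E(S)`). -/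
def edgesIn {V : Type*} [Fintype V] [DecidableEq V] (E : Finset (Sym2 V)) (S : Finset V) :
    Finset (Sym2 V) :=
  E.filter (fun e => ∀ a ∈ e, a ∈ S)

/-- Total weight of a finite set of edges. -/
def wSum {V : Type*} (w : Sym2 V → ℝ) (F : Finset (Sym2 V)) : ℝ :=
  ∑ e ∈ F, w e

open SimpleGraph

section EdgesCut

variable {V : Type*} [Fintype V] [DecidableEq V]

lemma mem_edgesCut {E : Finset (Sym2 V)} {S : Finset V} {e : Sym2 V} :
    e ∈ edgesCut E S ↔ e ∈ E ∧ ∃ a b : V, e = s(a, b) ∧ a ∈ S ∧ b ∉ S :=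
  mem_filter

lemma mk_mem_edgesCut_iff {E : Finset (Sym2 V)} {S : Finset V} {x y : V} (h : s(x, y) ∈ E) :
    s(x, y) ∈ edgesCut E S ↔ (x ∈ S ↔ y ∉ S) := by
  rw [mem_edgesCut]
  constructor
  · rintro ⟨-, a, b, hab, haS, hbS⟩
    rcases Sym2.eq_iff.1 hab with ⟨rfl, rfl⟩ | ⟨rfl, rfl⟩ <;> tauto
  · intro hxy
    by_cases hx : x ∈ S
    · exact ⟨h, x, y, rfl, hx, hxy.1 hx⟩
    · exact ⟨h, y, x, Sym2.eq_swap, by tauto, hx⟩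

variable {T : SimpleGraph V} [DecidableRel T.Adj]

lemma SimpleGraph.Walk.exists_mem_edges_mem_edgesCut (S : Finset V) {x y : V}
    (q : T.Walk x y) (hxy : ¬(x ∈ S ↔ y ∈ S)) :
    ∃ e ∈ q.edges, e ∈ edgesCut T.edgeFinset S := by
  induction q with
  | nil => tauto
  | @cons x w y h q ih =>
    by_cases hxw : x ∈ S ↔ w ∈ S
    · obtain ⟨e, he, heS⟩ := ih (by tauto)
      exact ⟨e, List.mem_cons_of_mem _ he, heS⟩
    · refine ⟨s(x, w), List.mem_cons_self, ?_⟩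
      rw [mk_mem_edgesCut_iff (mem_edgeFinset.2 h)]
      tauto

lemma SimpleGraph.Walk.mem_iff_mem_of_edgesCut_eq_singleton {W : Finset V} {f : Sym2 V}
    (hW : edgesCut T.edgeFinset W = {f}) {x y : V} (q : T.Walk x y) (hf : f ∉ q.edges) :
    x ∈ W ↔ y ∈ W := by
  by_contra hxy
  obtain ⟨e, he, heW⟩ := q.exists_mem_edges_mem_edgesCut W hxy
  rw [hW, mem_singleton] at heW
  exact hf (heW ▸ he)

lemma SimpleGraph.Walk.IsPath.mem_iff_notMem_of_edgesCut_eq_singleton {W : Finset V}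
    {f : Sym2 V} (hW : edgesCut T.edgeFinset W = {f}) {x y : V} {q : T.Walk x y}
    (hq : q.IsPath) (hf : f ∈ q.edges) : x ∈ W ↔ y ∉ W := by
  induction q with
  | nil => simp at hf
  | @cons x w y h q ih =>
    have hxw : s(x, w) ∈ edgesCut T.edgeFinset W ↔ (x ∈ W ↔ w ∉ W) :=
      mk_mem_edgesCut_iff (mem_edgeFinset.2 h)
    rw [hW, mem_singleton] at hxw
    by_cases hfx : s(x, w) = f
    · have hfq : f ∉ q.edges := hfx ▸ (List.nodup_cons.1 hq.edges_nodup).1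
      have := q.mem_iff_mem_of_edgesCut_eq_singleton hW hfq
      tauto
    · have := ih hq.of_cons (by simpa [Ne.symm hfx] using hf)
      tauto

lemma SimpleGraph.IsBridge.exists_edgesCut_eq_singleton {a b : V} (hab : T.Adj a b)
    (hbr : T.IsBridge s(a, b)) : ∃ W : Finset V, edgesCut T.edgeFinset W = {s(a, b)} := by
  classical
  let T' := T.deleteEdges {s(a, b)}
  have hnr : ¬T'.Reachable a b := isBridge_iff.1 hbr
  refine ⟨univ.filter (T'.Reachable a), ?_⟩
  refine Finset.ext (Sym2.ind fun x y => ?_)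
  by_cases hxy : T.Adj x y
  · rw [mk_mem_edgesCut_iff (mem_edgeFinset.2 hxy), mem_singleton]
    simp only [mem_filter, mem_univ, true_and]
    by_cases he : s(x, y) = s(a, b)
    · rcases Sym2.eq_iff.1 he with ⟨rfl, rfl⟩ | ⟨rfl, rfl⟩ <;> simpa using hnr
    · have hT' : T'.Adj x y := (deleteEdges_adj ..).2 ⟨hxy, he⟩
      have : T'.Reachable a x ↔ T'.Reachable a y :=
        ⟨fun hx => hx.trans hT'.reachable, fun hy => hy.trans hT'.symm.reachable⟩
      tauto
  · have hne : s(x, y) ≠ s(a, b) := fun he =>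
      hxy (T.mem_edgeSet.1 (he ▸ hab : s(x, y) ∈ T.edgeSet))
    simp [mem_edgesCut, hxy, hne]

end EdgesCut

theorem stmt14_general {V : Type*} [Fintype V] [DecidableEq V]
    (G : SimpleGraph V) [DecidableRel G.Adj]
    (c : Sym2 V → ℝ)
    (T : SimpleGraph V) [DecidableRel T.Adj] (hT : T.IsTree) (α : Sym2 V → ℝ)
    (hGH : ∀ f ∈ T.edgeFinset, ∀ Wf : Finset V, edgesCut T.edgeFinset Wf = {f} →
      wSum c (edgesCut G.edgeFinset Wf) = α f ∧
      ∀ S : Finset V, (∃ a b : V, f = s(a, b) ∧ a ∈ S ∧ b ∉ S) →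
        α f ≤ wSum c (edgesCut G.edgeFinset S))
    (u v : V) (p : T.Walk u v) (hp : p.IsPath)
    (f : Sym2 V) (hf : f ∈ p.edges) (hmin : ∀ g ∈ p.edges, α f ≤ α g) :
    ∀ Wf : Finset V, edgesCut T.edgeFinset Wf = {f} →
      (u ∈ Wf ↔ v ∉ Wf) ∧
      wSum c (edgesCut G.edgeFinset Wf) = α f ∧
      ∀ S : Finset V, (u ∈ S ↔ v ∉ S) →
        wSum c (edgesCut G.edgeFinset Wf) ≤ wSum c (edgesCut G.edgeFinset S) := by
  intro Wf hWf
  have hfT : f ∈ T.edgeFinset := mem_edgeFinset.2 (p.edges_subset_edgeSet hf)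
  have hcap := (hGH f hfT Wf hWf).1
  refine ⟨hp.mem_iff_notMem_of_edgesCut_eq_singleton hWf hf, hcap, fun S hS => ?_⟩
  obtain ⟨g, hg, hgS⟩ := p.exists_mem_edges_mem_edgesCut S (by tauto)
  obtain ⟨hgT, a, b, rfl, haS, hbS⟩ := mem_edgesCut.1 hgS
  have hab : T.Adj a b := mem_edgeFinset.1 hgT
  obtain ⟨Wg, hWg⟩ :=
    (isAcyclic_iff_forall_adj_isBridge.1 hT.isAcyclic hab).exists_edgesCut_eq_singleton hab
  calc wSum c (edgesCut G.edgeFinset Wf) = α f := hcap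
    _ ≤ α s(a, b) := hmin _ hg
    _ ≤ wSum c (edgesCut G.edgeFinset S) := (hGH _ hgT Wg hWg).2 S ⟨a, b, rfl, haS, hbS⟩

theorem stmt14 {V : Type*} [Fintype V] [DecidableEq V]
    (G : SimpleGraph V) [DecidableRel G.Adj] (hconn : G.Connected)
    (c : Sym2 V → ℝ) (hc : ∀ e ∈ G.edgeFinset, 0 ≤ c e)
    (T : SimpleGraph V) [DecidableRel T.Adj] (hT : T.IsTree) (α : Sym2 V → ℝ)
    (hGH : ∀ f ∈ T.edgeFinset, ∀ Wf : Finset V, edgesCut T.edgeFinset Wf = {f} →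
      wSum c (edgesCut G.edgeFinset Wf) = α f ∧
      ∀ S : Finset V, (∃ a b : V, f = s(a, b) ∧ a ∈ S ∧ b ∉ S) →
        α f ≤ wSum c (edgesCut G.edgeFinset S))
    (u v : V) (p : T.Walk u v) (hp : p.IsPath)
    (f : Sym2 V) (hf : f ∈ p.edges) (hmin : ∀ g ∈ p.edges, α f ≤ α g) :
    ∀ Wf : Finset V, edgesCut T.edgeFinset Wf = {f} →
      (u ∈ Wf ↔ v ∉ Wf) ∧
      wSum c (edgesCut G.edgeFinset Wf) = α f ∧
      ∀ S : Finset V, (u ∈ S ↔ v ∉ S) →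
        wSum c (edgesCut G.edgeFinset Wf) ≤ wSum c (edgesCut G.edgeFinset S) :=
  stmt14_general G c T hT α hGH u v p hp f hf hmin
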